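/- Let q be a prime power and F a finite field with q² elements, and write x̄ = x^q for the Frobenius automorphism of F over its subfield with q elements. In SL₂(F), the three subgroups H₁ = {[[1, x], [0, 1]] : x ∈ F}, H₂ = {[[1, 0], [y, 1]] : y ∈ F}, and H₃ = SU₂(F_q) = {[[a, b], [−b̄, ā]] : a, b ∈ F, a·ā + b·b̄ = 1} satisfy the triple product property, with |H₁| = |H₂| = q² and |H₃| = q³ − q. Consequently, SL₂(F_{q²}), a group of order q⁶ − q², realizes ⟨q², q², q³ − q⟩. -/

import Mathlib

/-- The right quotient set `Q(S) = {s₁s₂⁻¹ : s₁, s₂ ∈ S}` of a subset of a group. -/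
def rightQuotient {G : Type*} [Group G] (S : Set G) : Set G :=
  {g | ∃ s₁ ∈ S, ∃ s₂ ∈ S, g = s₁ * s₂⁻¹}

/-- Subsets `S₁, S₂, S₃` of a group satisfy the triple product property if whenever
`qᵢ ∈ Q(Sᵢ)` and `q₁q₂q₃ = 1`, we have `q₁ = q₂ = q₃ = 1`. -/
def TPP {G : Type*} [Group G] (S₁ S₂ S₃ : Set G) : Prop :=
  ∀ q₁ ∈ rightQuotient S₁, ∀ q₂ ∈ rightQuotient S₂, ∀ q₃ ∈ rightQuotient S₃,
    q₁ * q₂ * q₃ = 1 → q₁ = 1 ∧ q₂ = 1 ∧ q₃ = 1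

/-- A group `G` realizes `⟨n₁, n₂, n₃⟩` if there are finite subsets `Sᵢ ⊆ G` with
`|Sᵢ| = nᵢ` satisfying the triple product property. -/
def Realizes (G : Type*) [Group G] (n₁ n₂ n₃ : ℕ) : Prop :=
  ∃ S₁ S₂ S₃ : Set G, S₁.Finite ∧ S₂.Finite ∧ S₃.Finite ∧
    S₁.ncard = n₁ ∧ S₂.ncard = n₂ ∧ S₃.ncard = n₃ ∧ TPP S₁ S₂ S₃

/-- The subgroup (as a set) of upper unitriangular matrices in `SL₂(F)`. -/
def sl2H₁ (F : Type*) [Field F] : Set (Matrix.SpecialLinearGroup (Fin 2) F) :=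
  {M | ∃ x : F, (M : Matrix (Fin 2) (Fin 2) F) = !![1, x; 0, 1]}

/-- The subgroup (as a set) of lower unitriangular matrices in `SL₂(F)`. -/
def sl2H₂ (F : Type*) [Field F] : Set (Matrix.SpecialLinearGroup (Fin 2) F) :=
  {M | ∃ y : F, (M : Matrix (Fin 2) (Fin 2) F) = !![1, 0; y, 1]}

/-- The special unitary group `SU₂(F_q)` (as a subset of `SL₂(F_{q²})`), where the
Frobenius `x ↦ x^q` plays the role of conjugation. -/
def su2 (F : Type*) [Field F] (q : ℕ) : Set (Matrix.SpecialLinearGroup (Fin 2) F) :=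
  {M | ∃ a b : F, a * a ^ q + b * b ^ q = 1 ∧
    (M : Matrix (Fin 2) (Fin 2) F) = !![a, b; -(b ^ q), a ^ q]}

/-!
The Frobenius `σ x = x ^ q` is an involutive ring automorphism of `F`, and `su2 F q` is the group
of matrices `[[a, b], [-σ b, σ a]]` in `SL₂(F)`. All three sets are subgroups, so the triple product
property only asks that `u(x) l(y) g = 1`, with `u(x)`, `l(y)` the upper and lower unitriangular
matrices and `g ∈ SU₂`, forces `x = y = 0`. But then
`g = [[1, -x], [-y, 1 + x y]]`, and the shape of `g` gives `y = -σ x` and `x y = 0`, hence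
`x σ x = 0` and `x = 0`.

For `|SU₂| = q³ - q` we count pairs with `N a + N b = 1`, `N x = x ^ (q + 1)`: since `Fˣ` is cyclic
of order `(q + 1)(q - 1)`, each nonzero `σ`-fixed value of `N` is taken exactly `q + 1` times.
-/

open Finset MatrixGroups

theorem rightQuotient_coe_subgroup {G : Type*} [Group G] (K : Subgroup G) :
    rightQuotient (K : Set G) = K := by
  ext g
  refine ⟨?_, fun hg => ⟨g, hg, 1, K.one_mem, by rw [inv_one, mul_one]⟩⟩
  rintro ⟨a, ha, b, hb, rfl⟩
  exact K.mul_mem ha (K.inv_mem hb)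

theorem tpp_coe_subgroup_iff {G : Type*} [Group G] (K₁ K₂ K₃ : Subgroup G) :
    TPP (K₁ : Set G) K₂ K₃ ↔
      ∀ a ∈ K₁, ∀ b ∈ K₂, ∀ c ∈ K₃, a * b * c = 1 → a = 1 ∧ b = 1 ∧ c = 1 := by
  simp only [TPP, rightQuotient_coe_subgroup, SetLike.mem_coe]

theorem IsCyclic.card_pow_eq_of_pow_eq_one {G : Type*} [CommGroup G] [IsCyclic G] [Fintype G]
    [DecidableEq G] {d e : ℕ} (hG : Fintype.card G = d * e) {c : G} (hc : c ^ e = 1) :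
    #{x : G | x ^ d = c} = d := by
  have hd : d ≠ 0 := by rintro rfl; simp at hG
  have hrange : (powMonoidHom d : G →* G).range = (powMonoidHom e).ker := by
    refine Subgroup.eq_of_le_of_card_ge ?_ ?_
    · rintro _ ⟨x, rfl⟩
      simp [← pow_mul, ← hG, pow_card_eq_one]
    · rw [IsCyclic.card_powMonoidHom_range, IsCyclic.card_powMonoidHom_ker,
        Nat.card_eq_fintype_card, hG, Nat.gcd_mul_left_left, Nat.gcd_mul_right_left,
        Nat.mul_div_cancel_left _ (Nat.pos_of_ne_zero hd)]
  obtain ⟨α, rfl⟩ : c ∈ (powMonoidHom d : G →* G).range := hrange ▸ hc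
  calc #{x : G | x ^ d = α ^ d} = #{x : G | x ^ d = 1} := by
        simpa using MonoidHom.card_fiber_eq_of_mem_range (powMonoidHom d) ⟨α, rfl⟩ ⟨1, one_pow d⟩
    _ = Nat.card (powMonoidHom d : G →* G).ker := by
        rw [← Fintype.card_subtype, ← Nat.card_eq_fintype_card]; rfl
    _ = d := by
        rw [IsCyclic.card_powMonoidHom_ker, Nat.card_eq_fintype_card, hG, Nat.gcd_mul_right_left]

section FiniteField

variable {F : Type*} [Field F] [Fintype F] {q : ℕ}

theorem exists_ringHom_eq_pow_of_card_eq_pow {k : ℕ} (hq : IsPrimePow q)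
    (hF : Fintype.card F = q ^ k) : ∃ σ : F →+* F, ∀ x, σ x = x ^ q := by
  obtain ⟨p, n, hp, -, rfl⟩ := (isPrimePow_nat_iff q).mp hq
  have := Fact.mk hp
  have := charP_of_card_eq_prime_pow (hF.trans (pow_mul p n k).symm)
  exact ⟨iterateFrobenius F p n, fun x => iterateFrobenius_def ..⟩

theorem FiniteField.pow_pow_eq_self_of_card_eq_sq (hF : Fintype.card F = q ^ 2) (x : F) :
    (x ^ q) ^ q = x := by
  rw [← pow_mul, ← sq, ← hF, FiniteField.pow_card]

theorem FiniteField.card_pow_succ_eq [DecidableEq F] (hF : Fintype.card F = q ^ 2) {c : F}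
    (hc : c ≠ 0) (hcq : c ^ q = c) : #{x : F | x ^ (q + 1) = c} = q + 1 := by
  have hq : 1 ≤ q := Nat.one_le_iff_ne_zero.mpr <| by
    rintro rfl; simpa [hF] using Fintype.one_lt_card (α := F)
  have hunits : Fintype.card Fˣ = (q + 1) * (q - 1) := by
    rw [Fintype.card_units, hF, ← Nat.sq_sub_sq, one_pow]
  have hc' : Units.mk0 c hc ^ (q - 1) = 1 :=
    Units.ext <| mul_right_cancel₀ hc <| by simp [← pow_succ, Nat.sub_add_cancel hq, hcq]
  refine Eq.trans ?_ (IsCyclic.card_pow_eq_of_pow_eq_one hunits hc')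
  refine (card_bij (fun (u : Fˣ) _ => (u : F)) ?_ (fun _ _ _ _ => Units.ext) ?_).symm
  · intro u hu
    simpa [Units.ext_iff] using (mem_filter.mp hu).2
  · intro x hx
    have hx : x ^ (q + 1) = c := (mem_filter.mp hx).2
    have hx0 : x ≠ 0 := by rintro rfl; simp [← hx] at hc
    exact ⟨Units.mk0 x hx0, by simp [Units.ext_iff, hx], rfl⟩

theorem FiniteField.ncard_pow_succ_add_pow_succ_eq_one (σ : F →+* F) (hσ : ∀ x, σ x = x ^ q)
    (hF : Fintype.card F = q ^ 2) :
    {p : F × F | p.1 ^ (q + 1) + p.2 ^ (q + 1) = 1}.ncard = q ^ 3 - q := by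
  classical
  have hq : 2 ≤ q := by
    by_contra! h
    interval_cases q <;> simpa [hF] using Fintype.one_lt_card (α := F)
  have hfiber (a : F) :
      #{b : F | b ^ (q + 1) = 1 - a ^ (q + 1)} = if a ^ (q + 1) = 1 then 1 else q + 1 := by
    split_ifs with ha
    · exact card_eq_one.mpr ⟨0, by ext; simp [ha]⟩
    · refine FiniteField.card_pow_succ_eq hF (sub_ne_zero.mpr (Ne.symm ha)) ?_
      rw [← hσ, map_sub, map_one, map_pow, hσ, pow_succ,
        FiniteField.pow_pow_eq_self_of_card_eq_sq hF, ← pow_succ']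
  have hsplit := card_filter_add_card_filter_not (s := univ) (fun a : F => a ^ (q + 1) = 1)
  rw [card_univ, hF, FiniteField.card_pow_succ_eq hF one_ne_zero (one_pow q)] at hsplit
  calc {p : F × F | p.1 ^ (q + 1) + p.2 ^ (q + 1) = 1}.ncard
      = ∑ a : F, #{b : F | b ^ (q + 1) = 1 - a ^ (q + 1)} := by
        rw [Set.ncard_eq_toFinset_card', Set.toFinset_ofPred, card_filter, Fintype.sum_prod_type]
        simp only [card_filter, eq_sub_iff_add_eq']
    _ = ∑ a : F, if a ^ (q + 1) = 1 then 1 else q + 1 := sum_congr rfl fun a _ => hfiber a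
    _ = (q + 1) + (q ^ 2 - (q + 1)) * (q + 1) := by
        rw [sum_ite, sum_const, sum_const, FiniteField.card_pow_succ_eq hF one_ne_zero (one_pow q),
          smul_eq_mul, smul_eq_mul, mul_one]
        congr 2
        omega
    _ = q ^ 3 - q := by
        have : q + 1 ≤ q ^ 2 := by nlinarith
        have : q ≤ q ^ 3 := Nat.le_self_pow three_ne_zero q
        zify [*]
        ring

end FiniteField

namespace Matrix.SpecialLinearGroup

theorem card_mul_card_sub_one {n : Type*} [Fintype n] [DecidableEq n] [Nonempty n]
    {F : Type*} [Field F] [Fintype F] :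
    Nat.card (SpecialLinearGroup n F) * (Fintype.card F - 1) = Nat.card (GL n F) := by
  have hrange : (toGL : SpecialLinearGroup n F →* GL n F).range =
      (GeneralLinearGroup.det : GL n F →* Fˣ).ker := by
    ext g
    refine ⟨?_, fun hg => ⟨⟨g, congrArg Units.val hg⟩, Units.ext rfl⟩⟩
    rintro ⟨A, rfl⟩
    exact coeToGL_det A
  have hindex : (GeneralLinearGroup.det : GL n F →* Fˣ).ker.index = Fintype.card F - 1 := by
    rw [Subgroup.index_ker, MonoidHom.range_eq_top.mpr GeneralLinearGroup.det_surjective,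
      Subgroup.card_top, Nat.card_units, Nat.card_eq_fintype_card]
  rw [← hindex, ← Subgroup.card_mul_index (GeneralLinearGroup.det : GL n F →* Fˣ).ker]
  congr 1
  exact Nat.card_congr
    ((MonoidHom.ofInjective toGL_injective).trans (MulEquiv.subgroupCongr hrange)).toEquiv

theorem card_two {F : Type*} [Field F] [Fintype F] :
    Nat.card SL(2, F) = Fintype.card F ^ 3 - Fintype.card F := by
  have h := card_mul_card_sub_one (n := Fin 2) (F := F)
  rw [Matrix.card_GL_field, Fin.prod_univ_two] at h
  simp only [Fin.val_zero, Fin.val_one, pow_zero, pow_one] at h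
  have hk : 1 < Fintype.card F := Fintype.one_lt_card
  generalize Fintype.card F = k at h hk ⊢
  refine Nat.eq_of_mul_eq_mul_right (Nat.sub_pos_of_lt hk) (h.trans ?_)
  have : 1 ≤ k ^ 2 := Nat.one_le_pow _ _ (by omega)
  have : k ≤ k ^ 2 := Nat.le_self_pow two_ne_zero k
  have : k ≤ k ^ 3 := Nat.le_self_pow three_ne_zero k
  zify [*, hk.le]
  ring

section CommRing

variable {R : Type*} [CommRing R]

def upperUnitriangular : Multiplicative R →* SL(2, R) where
  toFun x := (⟨!![1, x.toAdd; 0, 1], by simp⟩ : SL(2, R))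
  map_one' := Subtype.ext <| by simp [one_fin_two]
  map_mul' x y := Subtype.ext <| by
    change _ = !![1, x.toAdd; 0, 1] * !![1, y.toAdd; 0, 1]
    simp [add_comm]

def lowerUnitriangular : Multiplicative R →* SL(2, R) where
  toFun y := (⟨!![1, 0; y.toAdd, 1], by simp⟩ : SL(2, R))
  map_one' := Subtype.ext <| by simp [one_fin_two]
  map_mul' x y := Subtype.ext <| by
    change _ = !![1, 0; x.toAdd, 1] * !![1, 0; y.toAdd, 1]
    simp

theorem upperUnitriangular_injective :
    Function.Injective (upperUnitriangular : Multiplicative R → SL(2, R)) :=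
  fun _ _ h => congrArg (fun M : SL(2, R) => M 0 1) h

theorem lowerUnitriangular_injective :
    Function.Injective (lowerUnitriangular : Multiplicative R → SL(2, R)) :=
  fun _ _ h => congrArg (fun M : SL(2, R) => M 1 0) h

/-- The norm condition `a σ a + b σ b = 1` of `SU₂` is not imposed: it is the determinant of
`[[a, b], [-σ b, σ a]]`. -/
def specialUnitary (σ : R →+* R) (hσ : Function.Involutive σ) : Subgroup SL(2, R) where
  carrier := {M | M 1 0 = -σ (M 0 1) ∧ M 1 1 = σ (M 0 0)}
  one_mem' := by simp
  mul_mem' := by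
    rintro M N ⟨hM₁, hM₂⟩ ⟨hN₁, hN₂⟩
    simp only [Set.mem_ofPred_eq, coe_mul, mul_apply, Fin.sum_univ_two, map_add, map_mul,
      map_neg, hM₁, hM₂, hN₁, hN₂, hσ _]
    constructor <;> ring
  inv_mem' := by
    rintro M ⟨h₁, h₂⟩
    simp [coe_inv, adjugate_fin_two, h₁, h₂, hσ _]

variable (σ : R →+* R) (hσ : Function.Involutive σ)

theorem tpp_unitriangular_specialUnitary [NoZeroDivisors R] :
    TPP ((upperUnitriangular (R := R)).range : Set SL(2, R))
      ((lowerUnitriangular (R := R)).range : Set SL(2, R))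
      (specialUnitary σ hσ : Set SL(2, R)) := by
  rw [tpp_coe_subgroup_iff]
  rintro _ ⟨x, rfl⟩ _ ⟨y, rfl⟩ g ⟨h₁, h₂⟩ hprod
  have hg : (g : Matrix (Fin 2) (Fin 2) R) =
      !![1, -x.toAdd; -y.toAdd, 1 + x.toAdd * y.toAdd] := by
    rw [eq_inv_of_mul_eq_one_right hprod, coe_inv]
    change adjugate (!![1, x.toAdd; 0, 1] * !![1, 0; y.toAdd, 1]) = _
    simp [adjugate_fin_two]
  have hyx : -y.toAdd = σ x.toAdd := by simpa [hg] using h₁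
  have hxy : x.toAdd * y.toAdd = 0 := by simpa [hg] using h₂
  have hx : x.toAdd = 0 := by
    have hnorm : x.toAdd * σ x.toAdd = 0 := by linear_combination -hxy - x.toAdd * hyx
    rcases mul_eq_zero.mp hnorm with h | h
    · exact h
    · exact (map_eq_zero_iff σ hσ.injective).mp h
  have hy : y.toAdd = 0 := by rw [← neg_eq_zero, hyx, hx, map_zero]
  obtain rfl : x = 1 := hx
  obtain rfl : y = 1 := hy
  exact ⟨map_one _, map_one _, by simpa using hprod⟩

theorem norm_add_norm_of_mem_specialUnitary {M : SL(2, R)} (hM : M ∈ specialUnitary σ hσ) :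
    M 0 0 * σ (M 0 0) + M 0 1 * σ (M 0 1) = 1 := by
  have hdet := M.det_coe
  rw [det_fin_two, hM.1, hM.2] at hdet
  linear_combination hdet

theorem ncard_specialUnitary :
    (specialUnitary σ hσ : Set SL(2, R)).ncard =
      {p : R × R | p.1 * σ p.1 + p.2 * σ p.2 = 1}.ncard := by
  have hinj : Set.InjOn (fun M : SL(2, R) => (M 0 0, M 0 1)) (specialUnitary σ hσ) := by
    rintro M ⟨hM₁, hM₂⟩ N ⟨hN₁, hN₂⟩ h
    obtain ⟨h₀₀, h₀₁⟩ := Prod.mk.inj h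
    ext i j
    fin_cases i <;> fin_cases j <;> simp_all
  rw [← hinj.ncard_image]
  congr 1
  ext ⟨a, b⟩
  refine ⟨?_, fun hab => ?_⟩
  · rintro ⟨M, hM, h⟩
    obtain ⟨rfl, rfl⟩ := Prod.mk.inj h
    exact norm_add_norm_of_mem_specialUnitary σ hσ hM
  · replace hab : a * σ a + b * σ b = 1 := hab
    refine ⟨⟨!![a, b; -σ b, σ a], ?_⟩, ⟨by simp, by simp⟩, rfl⟩
    rw [det_fin_two_of]
    linear_combination hab

end CommRing

section Field

variable {F : Type*} [Field F]

theorem coe_range_upperUnitriangular :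
    ((upperUnitriangular (R := F)).range : Set SL(2, F)) = sl2H₁ F := by
  ext M
  refine ⟨?_, fun ⟨x, hx⟩ => ⟨.ofAdd x, Subtype.ext hx.symm⟩⟩
  rintro ⟨x, rfl⟩
  exact ⟨x.toAdd, rfl⟩

theorem coe_range_lowerUnitriangular :
    ((lowerUnitriangular (R := F)).range : Set SL(2, F)) = sl2H₂ F := by
  ext M
  refine ⟨?_, fun ⟨y, hy⟩ => ⟨.ofAdd y, Subtype.ext hy.symm⟩⟩
  rintro ⟨y, rfl⟩
  exact ⟨y.toAdd, rfl⟩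

theorem coe_specialUnitary_eq_su2 {q : ℕ} (σ : F →+* F) (hσ : Function.Involutive σ)
    (hσq : ∀ x, σ x = x ^ q) : (specialUnitary σ hσ : Set SL(2, F)) = su2 F q := by
  ext M
  refine ⟨fun hM => ⟨M 0 0, M 0 1, ?_, ?_⟩, ?_⟩
  · simpa [hσq] using norm_add_norm_of_mem_specialUnitary σ hσ hM
  · ext i j
    fin_cases i <;> fin_cases j <;> simp [hM.1, hM.2, hσq]
  · rintro ⟨a, b, -, hM⟩
    exact ⟨by simp [hM, hσq], by simp [hM, hσq]⟩

theorem ncard_sl2H₁ : (sl2H₁ F).ncard = Nat.card F := by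
  rw [← coe_range_upperUnitriangular, MonoidHom.coe_range,
    Set.ncard_range_of_injective upperUnitriangular_injective]
  rfl

theorem ncard_sl2H₂ : (sl2H₂ F).ncard = Nat.card F := by
  rw [← coe_range_lowerUnitriangular, MonoidHom.coe_range,
    Set.ncard_range_of_injective lowerUnitriangular_injective]
  rfl

end Field

end Matrix.SpecialLinearGroup

open Matrix.SpecialLinearGroup

theorem stmt_7 (q : ℕ) (hq : IsPrimePow q) (F : Type*) [Field F] [Fintype F]
    (hF : Fintype.card F = q ^ 2) :
    (∃ K₁ K₂ K₃ : Subgroup (Matrix.SpecialLinearGroup (Fin 2) F),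
      (K₁ : Set (Matrix.SpecialLinearGroup (Fin 2) F)) = sl2H₁ F ∧
      (K₂ : Set (Matrix.SpecialLinearGroup (Fin 2) F)) = sl2H₂ F ∧
      (K₃ : Set (Matrix.SpecialLinearGroup (Fin 2) F)) = su2 F q) ∧
    (sl2H₁ F).ncard = q ^ 2 ∧ (sl2H₂ F).ncard = q ^ 2 ∧ (su2 F q).ncard = q ^ 3 - q ∧
    TPP (sl2H₁ F) (sl2H₂ F) (su2 F q) ∧
    Nat.card (Matrix.SpecialLinearGroup (Fin 2) F) = q ^ 6 - q ^ 2 ∧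
    Realizes (Matrix.SpecialLinearGroup (Fin 2) F) (q ^ 2) (q ^ 2) (q ^ 3 - q) := by
  obtain ⟨σ, hσq⟩ := exists_ringHom_eq_pow_of_card_eq_pow hq hF
  have hσ : Function.Involutive σ := fun x => by
    rw [hσq, hσq, FiniteField.pow_pow_eq_self_of_card_eq_sq hF]
  have hsu2 := coe_specialUnitary_eq_su2 σ hσ hσq
  have hH₁ : (sl2H₁ F).ncard = q ^ 2 := by rw [ncard_sl2H₁, Nat.card_eq_fintype_card, hF]
  have hH₂ : (sl2H₂ F).ncard = q ^ 2 := by rw [ncard_sl2H₂, Nat.card_eq_fintype_card, hF]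
  have hH₃ : (su2 F q).ncard = q ^ 3 - q := by
    rw [← hsu2, ncard_specialUnitary, ← FiniteField.ncard_pow_succ_add_pow_succ_eq_one σ hσq hF]
    simp only [hσq, ← pow_succ']
  have hTPP : TPP (sl2H₁ F) (sl2H₂ F) (su2 F q) := by
    rw [← coe_range_upperUnitriangular, ← coe_range_lowerUnitriangular, ← hsu2]
    exact tpp_unitriangular_specialUnitary σ hσ
  refine ⟨⟨_, _, _, coe_range_upperUnitriangular, coe_range_lowerUnitriangular, hsu2⟩,
    hH₁, hH₂, hH₃, hTPP, ?_, sl2H₁ F, sl2H₂ F, su2 F q, Set.toFinite _, Set.toFinite _,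
    Set.toFinite _, hH₁, hH₂, hH₃, hTPP⟩
  rw [card_two, hF, ← pow_mul]
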